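/- In the λG-calculus, the full simplification of a typable term t is a normal form reachable from t: t →g* simpfull(t) and simpfull(t) contains no redexes. -/

import Mathlib

namespace LambdaG

/-- Simple types: base types and arrow types. -/
inductive Ty : Type
  | base : ℕ → Ty
  | arr : Ty → Ty → Ty
deriving DecidableEq

/-- The height of a type. -/
def Ty.height : Ty → ℕ
  | .base _ => 0
  | .arr A B => 1 + max A.height B.height

/-- Terms of the λG-calculus: simply typed λ-terms extended with wrappers `⟨t | s⟩`. -/
inductive GTm : Type
  | var : ℕ → Ty → GTm
  | lam : ℕ → Ty → GTm → GTm
  | app : GTm → GTm → GTm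
  | wrap : GTm → GTm → GTm
deriving DecidableEq

/-- Capture-avoiding substitution `t[x^B := s]` (bound variables assumed suitably renamed). -/
def GTm.subst : GTm → ℕ → Ty → GTm → GTm
  | .var y C, x, B, s => if y = x ∧ C = B then s else .var y C
  | .lam y C t, x, B, s =>
      if y = x ∧ C = B then .lam y C t else .lam y C (t.subst x B s)
  | .app t u, x, B, s => .app (t.subst x B s) (u.subst x B s)
  | .wrap t u, x, B, s => .wrap (t.subst x B s) (u.subst x B s)

/-- `t L`: append the memorized terms of the memory `L` to `t` as wrappers. -/
def GTm.appMem (t : GTm) (L : List GTm) : GTm := L.foldl GTm.wrap t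

/-- The (unique) type of a λG-term, if typable.  A wrapper has the type of its body. -/
def GTm.typeof : GTm → Option Ty
  | .var _ A => some A
  | .lam _ A t => (t.typeof).map (Ty.arr A)
  | .app t u =>
      match t.typeof, u.typeof with
      | some (.arr A B), some A' => if A = A' then some B else none
      | _, _ => none
  | .wrap t u =>
      match t.typeof, u.typeof with
      | some A, some _ => some A
      | _, _ => none

/-- Whether a term is an m-abstraction, i.e. of the form `(λx.t)L`. -/
def GTm.headIsLam : GTm → Bool
  | .lam _ _ _ => true
  | .wrap t _ => t.headIsLam
  | _ => false

/-- The degree of an m-abstraction: the height of its type (`none` for non-m-abstractions). -/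
def GTm.mAbsDegree (t : GTm) : Option ℕ :=
  if t.headIsLam then t.typeof.map Ty.height else none

/-- Reduction in the λG-calculus: contextual closure of
`(λx.t)L s →g ⟨t[x := s] | s⟩L`. -/
inductive GStep : GTm → GTm → Prop
  | beta (x : ℕ) (A : Ty) (t : GTm) (L : List GTm) (s : GTm) :
      GStep (GTm.app (GTm.appMem (GTm.lam x A t) L) s)
            (GTm.appMem (GTm.wrap (t.subst x A s) s) L)
  | lam (x : ℕ) (A : Ty) {t t' : GTm} : GStep t t' →
      GStep (GTm.lam x A t) (GTm.lam x A t')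
  | appL {t t' : GTm} (s : GTm) : GStep t t' → GStep (GTm.app t s) (GTm.app t' s)
  | appR (t : GTm) {s s' : GTm} : GStep s s' → GStep (GTm.app t s) (GTm.app t s')
  | wrapL {t t' : GTm} (s : GTm) : GStep t t' → GStep (GTm.wrap t s) (GTm.wrap t' s)
  | wrapR (t : GTm) {s s' : GTm} : GStep s s' → GStep (GTm.wrap t s) (GTm.wrap t s')

/-- Reduction of degree `d`: contraction of redexes whose m-abstraction has degree `d`. -/
inductive GStepD (d : ℕ) : GTm → GTm → Prop
  | beta (x : ℕ) (A : Ty) (t : GTm) (L : List GTm) (s : GTm)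
      (hdeg : (GTm.appMem (GTm.lam x A t) L).mAbsDegree = some d) :
      GStepD d (GTm.app (GTm.appMem (GTm.lam x A t) L) s)
               (GTm.appMem (GTm.wrap (t.subst x A s) s) L)
  | lam (x : ℕ) (A : Ty) {t t' : GTm} : GStepD d t t' →
      GStepD d (GTm.lam x A t) (GTm.lam x A t')
  | appL {t t' : GTm} (s : GTm) : GStepD d t t' → GStepD d (GTm.app t s) (GTm.app t' s)
  | appR (t : GTm) {s s' : GTm} : GStepD d s s' → GStepD d (GTm.app t s) (GTm.app t s')
  | wrapL {t t' : GTm} (s : GTm) : GStepD d t t' → GStepD d (GTm.wrap t s) (GTm.wrap t' s)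
  | wrapR (t : GTm) {s s' : GTm} : GStepD d s s' → GStepD d (GTm.wrap t s) (GTm.wrap t s')

/-- Forgetful reduction: contextual closure of `⟨t | s⟩ ▷ t`. -/
inductive GForget : GTm → GTm → Prop
  | drop (t s : GTm) : GForget (GTm.wrap t s) t
  | lam (x : ℕ) (A : Ty) {t t' : GTm} : GForget t t' →
      GForget (GTm.lam x A t) (GTm.lam x A t')
  | appL {t t' : GTm} (s : GTm) : GForget t t' → GForget (GTm.app t s) (GTm.app t' s)
  | appR (t : GTm) {s s' : GTm} : GForget s s' → GForget (GTm.app t s) (GTm.app t s')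
  | wrapL {t t' : GTm} (s : GTm) : GForget t t' → GForget (GTm.wrap t s) (GTm.wrap t' s)
  | wrapR (t : GTm) {s s' : GTm} : GForget s s' → GForget (GTm.wrap t s) (GTm.wrap t s')

/-- Typing judgments `Γ ⊢ t : A` of the λG-calculus. -/
inductive GHasType : (ℕ → Option Ty) → GTm → Ty → Prop
  | var {Γ : ℕ → Option Ty} {x : ℕ} {A : Ty} :
      Γ x = some A → GHasType Γ (GTm.var x A) A
  | lam {Γ : ℕ → Option Ty} {x : ℕ} {A : Ty} {t : GTm} {B : Ty} :
      GHasType (Function.update Γ x (some A)) t B →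
      GHasType Γ (GTm.lam x A t) (Ty.arr A B)
  | app {Γ : ℕ → Option Ty} {t s : GTm} {A B : Ty} :
      GHasType Γ t (Ty.arr A B) → GHasType Γ s A → GHasType Γ (GTm.app t s) B
  | wrap {Γ : ℕ → Option Ty} {t s : GTm} {A B : Ty} :
      GHasType Γ t A → GHasType Γ s B → GHasType Γ (GTm.wrap t s) A

/-- Decompose an m-abstraction `(λx.t)L` into its abstraction and memory. -/
def GTm.decomp : GTm → Option ((ℕ × Ty × GTm) × List GTm)
  | .lam x A t => some ((x, A, t), [])
  | .wrap t s => (t.decomp).map (fun p => (p.1, p.2 ++ [s]))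
  | _ => none

/-- Simplification of degree `d`: the complete development of all redexes of degree `d`. -/
def GTm.simpD (d : ℕ) : GTm → GTm
  | .var y A => .var y A
  | .lam y A t => .lam y A (t.simpD d)
  | .wrap t s => .wrap (t.simpD d) (s.simpD d)
  | .app t s =>
      if t.mAbsDegree = some d then
        match (t.simpD d).decomp with
        | some ((x, A, b), L) =>
            GTm.appMem (GTm.wrap (b.subst x A (s.simpD d)) (s.simpD d)) L
        | none => .app (t.simpD d) (s.simpD d)
      else .app (t.simpD d) (s.simpD d)

/-- The max-degree of a term: the maximum degree of its redexes, or `0` if none. -/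
def GTm.maxdeg : GTm → ℕ
  | .var _ _ => 0
  | .lam _ _ t => t.maxdeg
  | .wrap t s => max t.maxdeg s.maxdeg
  | .app t s => max (max t.maxdeg s.maxdeg) ((t.mAbsDegree).getD 0)

/-- Iterated simplification `simp_1(⋯ simp_D(t))`. -/
def GTm.simpDown : ℕ → GTm → GTm
  | 0, t => t
  | d + 1, t => GTm.simpDown d (t.simpD (d + 1))

/-- Full simplification: `simpfull(t) = simp_1(simp_2(⋯ simp_D(t)))` where `D = maxdeg t`. -/
def GTm.simpfull (t : GTm) : GTm := GTm.simpDown t.maxdeg t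

/-- The weight of a term: its number of wrappers. -/
def GTm.weight : GTm → ℕ
  | .var _ _ => 0
  | .lam _ _ t => t.weight
  | .app t s => t.weight + s.weight
  | .wrap t s => t.weight + s.weight + 1

/-!
Each `simpD d` is a complete development of the redexes of degree `d`, so it is reached by
`→g`-steps, and it preserves types. If every redex of `t` has degree at most `d + 1`, every
redex of `simpD (d + 1) t` has degree at most `d`: a new redex arises either from substituting
an argument of type `A` for a head variable, or from a contractum of type `C` standing in head
position, and the contracted m-abstraction had type `A → C` of height `d + 1`. Iterating down to
degree `0` leaves a typable term of max-degree `0`, which has no redex at all: the m-abstraction of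
a redex has an arrow type, of height at least `1`.
-/

open Relation

theorem GHasType.typeof_eq {Γ : ℕ → Option Ty} {t : GTm} {A : Ty} (h : GHasType Γ t A) :
    t.typeof = some A := by
  induction h with
  | var => rfl
  | lam _ ih => simp [GTm.typeof, ih]
  | app _ _ ih₁ ih₂ => simp [GTm.typeof, ih₁, ih₂]
  | wrap _ _ ih₁ ih₂ => simp [GTm.typeof, ih₁, ih₂]

namespace GStep

theorem reflTransGen_lam (x : ℕ) (A : Ty) {t t' : GTm} (h : ReflTransGen GStep t t') :
    ReflTransGen GStep (.lam x A t) (.lam x A t') :=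
  h.lift (GTm.lam x A) fun _ _ => GStep.lam x A

theorem reflTransGen_app {t t' s s' : GTm} (ht : ReflTransGen GStep t t')
    (hs : ReflTransGen GStep s s') : ReflTransGen GStep (.app t s) (.app t' s') :=
  (ht.lift (GTm.app · s) fun _ _ => GStep.appL s).trans
    (hs.lift (GTm.app t' ·) fun _ _ => GStep.appR t')

theorem reflTransGen_wrap {t t' s s' : GTm} (ht : ReflTransGen GStep t t')
    (hs : ReflTransGen GStep s s') : ReflTransGen GStep (.wrap t s) (.wrap t' s') :=
  (ht.lift (GTm.wrap · s) fun _ _ => GStep.wrapL s).trans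
    (hs.lift (GTm.wrap t' ·) fun _ _ => GStep.wrapR t')

end GStep

namespace GTm

section Typing

theorem typeof_lam_eq_some {x : ℕ} {A C : Ty} {t : GTm} :
    (lam x A t).typeof = some C ↔ ∃ B, t.typeof = some B ∧ C = .arr A B := by
  rcases ht : t.typeof <;> simp [typeof, ht, eq_comm]

theorem typeof_app_eq_some {u v : GTm} {C : Ty} :
    (app u v).typeof = some C ↔ ∃ A, u.typeof = some (.arr A C) ∧ v.typeof = some A := by
  rcases hu : u.typeof with _ | _ | ⟨A, B⟩ <;> rcases hv : v.typeof with _ | A' <;>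
    simp [typeof, hu, hv, eq_comm]

theorem typeof_wrap_eq_some {u v : GTm} {C : Ty} :
    (wrap u v).typeof = some C ↔ u.typeof = some C ∧ ∃ D, v.typeof = some D := by
  rcases hu : u.typeof <;> rcases hv : v.typeof <;> simp [typeof, hu, hv]

end Typing

section Memory

@[simp]
theorem appMem_nil (u : GTm) : appMem u [] = u := rfl

@[simp]
theorem appMem_cons (u a : GTm) (L : List GTm) : appMem u (a :: L) = appMem (wrap u a) L := rfl

theorem appMem_append_singleton (u s : GTm) (L : List GTm) :
    appMem u (L ++ [s]) = wrap (appMem u L) s := by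
  simp [appMem]

@[simp]
theorem headIsLam_appMem (u : GTm) (L : List GTm) : (appMem u L).headIsLam = u.headIsLam := by
  induction L generalizing u <;> simp [headIsLam, *]

theorem typeof_appMem_eq_some {u : GTm} {L : List GTm} {C : Ty} :
    (appMem u L).typeof = some C ↔
      u.typeof = some C ∧ ∀ l ∈ L, ∃ D, l.typeof = some D := by
  induction L generalizing u <;> simp [typeof_wrap_eq_some, and_assoc, *]

theorem maxdeg_appMem (u : GTm) (L : List GTm) :
    (appMem u L).maxdeg = max u.maxdeg ((L.map maxdeg).foldr max 0) := by
  induction L generalizing u <;> simp [maxdeg, max_assoc, max_left_comm, *]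

theorem eq_appMem_lam_of_decomp_eq_some {t b : GTm} {x : ℕ} {A : Ty} {L : List GTm}
    (h : t.decomp = some ((x, A, b), L)) : t = appMem (lam x A b) L := by
  induction t generalizing L with
  | lam =>
    simp only [decomp, Option.some.injEq, Prod.mk.injEq] at h
    obtain ⟨⟨rfl, rfl, rfl⟩, rfl⟩ := h
    rfl
  | wrap u v ih =>
    obtain ⟨⟨p, L'⟩, hp, h⟩ := Option.map_eq_some_iff.mp h
    simp only [Prod.mk.injEq] at h
    obtain ⟨rfl, rfl⟩ := h
    rw [ih hp, appMem_append_singleton]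
  | var | app => simp [decomp] at h

theorem exists_decomp_eq_some_of_headIsLam {t : GTm} (h : t.headIsLam = true) :
    ∃ x A b L, t.decomp = some ((x, A, b), L) := by
  induction t with
  | lam x A b => exact ⟨x, A, b, [], rfl⟩
  | wrap u v ih =>
    obtain ⟨x, A, b, L, hu⟩ := ih h
    exact ⟨x, A, b, L ++ [v], by simp [decomp, hu]⟩
  | var | app => simp [headIsLam] at h

theorem mAbsDegree_eq_some_height {t : GTm} {C : Ty} (hl : t.headIsLam = true)
    (ht : t.typeof = some C) : t.mAbsDegree = some C.height := by
  simp [mAbsDegree, hl, ht]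

theorem headIsLam_of_mAbsDegree_eq_some {t : GTm} {d : ℕ} (h : t.mAbsDegree = some d) :
    t.headIsLam = true := by
  by_contra hl
  simp [mAbsDegree, hl] at h

end Memory

section Subst

variable {x : ℕ} {B : Ty} {s : GTm}

theorem typeof_subst (hs : s.typeof = some B) {t : GTm} {C : Ty} (ht : t.typeof = some C) :
    (t.subst x B s).typeof = some C := by
  induction t generalizing C with
  | var y D =>
    simp only [typeof, Option.some.injEq] at ht
    subst ht
    by_cases h : y = x ∧ D = B
    · simp [subst, h, hs]
    · simp [subst, h, typeof]
  | lam y D u ih =>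
    obtain ⟨B', hu, rfl⟩ := typeof_lam_eq_some.mp ht
    by_cases h : y = x ∧ D = B
    · simpa [subst, h] using ht
    · simp [subst, h, typeof, ih hu]
  | app u v ihu ihv =>
    obtain ⟨A, hu, hv⟩ := typeof_app_eq_some.mp ht
    exact typeof_app_eq_some.mpr ⟨A, ihu hu, ihv hv⟩
  | wrap u v ihu ihv =>
    obtain ⟨hu, D, hD⟩ := typeof_wrap_eq_some.mp ht
    exact typeof_wrap_eq_some.mpr ⟨ihu hu, D, ihv hD⟩

theorem headIsLam_or_eq_of_headIsLam_subst {t : GTm} {C : Ty} (ht : t.typeof = some C)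
    (h : (t.subst x B s).headIsLam = true) : t.headIsLam = true ∨ C = B := by
  induction t generalizing C with
  | var y D =>
    simp only [typeof, Option.some.injEq] at ht
    by_cases hc : y = x ∧ D = B
    · exact .inr (ht ▸ hc.2)
    · simp [subst, hc, headIsLam] at h
  | lam => exact .inl rfl
  | app => simp [subst, headIsLam] at h
  | wrap u v ih => exact ih (typeof_wrap_eq_some.mp ht).1 h

theorem maxdeg_subst_le (hs : s.typeof = some B) {t : GTm} {C : Ty}
    (ht : t.typeof = some C) :
    (t.subst x B s).maxdeg ≤ max t.maxdeg (max s.maxdeg B.height) := by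
  induction t generalizing C with
  | var y D =>
    by_cases h : y = x ∧ D = B
    · simp [subst, h]
    · simp [subst, h, maxdeg]
  | lam y D u ih =>
    obtain ⟨B', hu, -⟩ := typeof_lam_eq_some.mp ht
    by_cases h : y = x ∧ D = B
    · simp [subst, h, maxdeg]
    · simpa [subst, h, maxdeg] using ih hu
  | app u v ihu ihv =>
    obtain ⟨A, hu, hv⟩ := typeof_app_eq_some.mp ht
    have hdeg : ((u.subst x B s).mAbsDegree).getD 0 ≤ max ((u.mAbsDegree).getD 0) B.height := by
      by_cases hl : (u.subst x B s).headIsLam = true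
      · rw [mAbsDegree_eq_some_height hl (typeof_subst hs hu)]
        rcases headIsLam_or_eq_of_headIsLam_subst hu hl with hl' | rfl
        · simp [mAbsDegree_eq_some_height hl' hu]
        · simp
      · simp [mAbsDegree, hl]
    have := ihu hu
    have := ihv hv
    simp only [subst, maxdeg] at *
    omega
  | wrap u v ihu ihv =>
    obtain ⟨hu, D, hD⟩ := typeof_wrap_eq_some.mp ht
    have := ihu hu
    have := ihv hD
    simp only [subst, maxdeg] at *
    omega

end Subst

section Simplification

variable {d : ℕ}

theorem headIsLam_simpD {t : GTm} (h : t.headIsLam = true) : (t.simpD d).headIsLam = true := by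
  induction t with
  | lam => rfl
  | wrap u v ih => exact ih h
  | var | app => simp [headIsLam] at h

theorem simpD_app_of_mAbsDegree_ne {u : GTm} (v : GTm) (h : u.mAbsDegree ≠ some d) :
    (app u v).simpD d = app (u.simpD d) (v.simpD d) := by
  simp [simpD, h]

theorem exists_simpD_app_of_mAbsDegree_eq {u : GTm} (v : GTm) (h : u.mAbsDegree = some d) :
    ∃ x A b L, u.simpD d = appMem (lam x A b) L ∧
      (app u v).simpD d = appMem (wrap (b.subst x A (v.simpD d)) (v.simpD d)) L := by
  obtain ⟨x, A, b, L, hdec⟩ := exists_decomp_eq_some_of_headIsLam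
    (headIsLam_simpD (d := d) (headIsLam_of_mAbsDegree_eq_some h))
  exact ⟨x, A, b, L, eq_appMem_lam_of_decomp_eq_some hdec, by simp [simpD, h, hdec]⟩

theorem reflTransGen_simpD (t : GTm) : ReflTransGen GStep t (t.simpD d) := by
  induction t with
  | var => exact .refl
  | lam x A u ih => exact GStep.reflTransGen_lam x A ih
  | wrap u v ihu ihv => exact GStep.reflTransGen_wrap ihu ihv
  | app u v ihu ihv =>
    by_cases hc : u.mAbsDegree = some d
    · obtain ⟨x, A, b, L, hu, hred⟩ := exists_simpD_app_of_mAbsDegree_eq v hc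
      rw [hred]
      refine (GStep.reflTransGen_app ihu ihv).tail ?_
      rw [hu]
      exact GStep.beta x A b L (v.simpD d)
    · rw [simpD_app_of_mAbsDegree_ne v hc]
      exact GStep.reflTransGen_app ihu ihv

theorem typeof_simpD {t : GTm} {C : Ty} (ht : t.typeof = some C) :
    (t.simpD d).typeof = some C := by
  induction t generalizing C with
  | var => exact ht
  | lam x A u ih =>
    obtain ⟨B, hu, rfl⟩ := typeof_lam_eq_some.mp ht
    exact typeof_lam_eq_some.mpr ⟨B, ih hu, rfl⟩
  | wrap u v ihu ihv =>
    obtain ⟨hu, D, hD⟩ := typeof_wrap_eq_some.mp ht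
    exact typeof_wrap_eq_some.mpr ⟨ihu hu, D, ihv hD⟩
  | app u v ihu ihv =>
    obtain ⟨A₀, hu, hv⟩ := typeof_app_eq_some.mp ht
    by_cases hc : u.mAbsDegree = some d
    · obtain ⟨x, A, b, L, hu', hred⟩ := exists_simpD_app_of_mAbsDegree_eq v hc
      have hvt := ihv hv
      obtain ⟨hlam, hL⟩ := typeof_appMem_eq_some.mp (hu' ▸ ihu hu)
      obtain ⟨B, hb, hAB⟩ := typeof_lam_eq_some.mp hlam
      obtain ⟨rfl, rfl⟩ := Ty.arr.inj hAB
      rw [hred, typeof_appMem_eq_some, typeof_wrap_eq_some]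
      exact ⟨⟨typeof_subst hvt hb, A₀, hvt⟩, hL⟩
    · rw [simpD_app_of_mAbsDegree_ne v hc]
      exact typeof_app_eq_some.mpr ⟨A₀, ihu hu, ihv hv⟩

theorem headIsLam_or_height_lt_of_headIsLam_simpD {t : GTm} {C : Ty}
    (ht : t.typeof = some C) (h : (t.simpD d).headIsLam = true) :
    t.headIsLam = true ∨ C.height < d := by
  induction t generalizing C with
  | var => simp [simpD, headIsLam] at h
  | lam => exact .inl rfl
  | wrap u v ih => exact ih (typeof_wrap_eq_some.mp ht).1 h
  | app u v =>
    obtain ⟨A, hu, -⟩ := typeof_app_eq_some.mp ht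
    by_cases hc : u.mAbsDegree = some d
    · rw [mAbsDegree_eq_some_height (headIsLam_of_mAbsDegree_eq_some hc) hu,
        Option.some.injEq] at hc
      simp only [Ty.height] at hc
      exact .inr (by omega)
    · simp [simpD_app_of_mAbsDegree_ne v hc, headIsLam] at h

theorem mAbsDegree_simpD_getD_le {u : GTm} {C : Ty} (hu : u.typeof = some C)
    (hm : (u.mAbsDegree).getD 0 ≤ d + 1) (hne : u.mAbsDegree ≠ some (d + 1)) :
    ((u.simpD (d + 1)).mAbsDegree).getD 0 ≤ d := by
  by_cases hl : (u.simpD (d + 1)).headIsLam = true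
  · rw [mAbsDegree_eq_some_height hl (typeof_simpD hu), Option.getD_some]
    rcases headIsLam_or_height_lt_of_headIsLam_simpD hu hl with hl' | hC
    · rw [mAbsDegree_eq_some_height hl' hu] at hm hne
      simp only [Option.getD_some, ne_eq, Option.some.injEq] at hm hne
      omega
    · omega
  · simp [mAbsDegree, hl]

theorem maxdeg_simpD_le {t : GTm} {C : Ty} (ht : t.typeof = some C) (hm : t.maxdeg ≤ d + 1) :
    (t.simpD (d + 1)).maxdeg ≤ d := by
  induction t generalizing C with
  | var => simp [simpD, maxdeg]
  | lam x A u ih =>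
    obtain ⟨B, hu, -⟩ := typeof_lam_eq_some.mp ht
    exact ih hu hm
  | wrap u v ihu ihv =>
    obtain ⟨hu, D, hD⟩ := typeof_wrap_eq_some.mp ht
    simp only [maxdeg, sup_le_iff] at hm
    simpa [simpD, maxdeg] using ⟨ihu hu hm.1, ihv hD hm.2⟩
  | app u v ihu ihv =>
    obtain ⟨A₀, hu, hv⟩ := typeof_app_eq_some.mp ht
    simp only [maxdeg, sup_le_iff] at hm
    obtain ⟨⟨hmu, hmv⟩, hmdeg⟩ := hm
    have hu' := ihu hu hmu
    have hv' := ihv hv hmv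
    by_cases hc : u.mAbsDegree = some (d + 1)
    · obtain ⟨x, A, b, L, hdec, hred⟩ := exists_simpD_app_of_mAbsDegree_eq v hc
      obtain ⟨hlam, -⟩ := typeof_appMem_eq_some.mp (hdec ▸ typeof_simpD (d := d + 1) hu)
      obtain ⟨B, hb, hAB⟩ := typeof_lam_eq_some.mp hlam
      obtain ⟨rfl, rfl⟩ := Ty.arr.inj hAB
      have hA : A₀.height ≤ d := by
        rw [mAbsDegree_eq_some_height (headIsLam_of_mAbsDegree_eq_some hc) hu,
          Option.some.injEq] at hc
        simp only [Ty.height] at hc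
        omega
      have hsub := maxdeg_subst_le (x := x) (typeof_simpD (d := d + 1) hv) hb
      rw [hdec, maxdeg_appMem] at hu'
      rw [hred, maxdeg_appMem]
      simp only [maxdeg, sup_le_iff] at hu' hsub ⊢
      omega
    · have hdeg := mAbsDegree_simpD_getD_le hu hmdeg hc
      rw [simpD_app_of_mAbsDegree_ne v hc]
      simp only [maxdeg, sup_le_iff]
      exact ⟨⟨hu', hv'⟩, hdeg⟩

end Simplification

theorem not_gStep_of_maxdeg_eq_zero {t t' : GTm} {C : Ty} (ht : t.typeof = some C)
    (hm : t.maxdeg = 0) : ¬ GStep t t' := by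
  intro h
  induction h generalizing C with
  | beta x A b L v =>
    obtain ⟨A₀, hu, -⟩ := typeof_app_eq_some.mp ht
    have hl : (appMem (lam x A b) L).headIsLam = true := by simp [headIsLam]
    simp [maxdeg, mAbsDegree_eq_some_height hl hu, Ty.height] at hm
  | lam x A _ ih =>
    obtain ⟨B, hu, -⟩ := typeof_lam_eq_some.mp ht
    exact ih hu hm
  | appL v _ ih =>
    obtain ⟨A₀, hu, -⟩ := typeof_app_eq_some.mp ht
    simp only [maxdeg, Nat.max_eq_zero_iff] at hm
    exact ih hu hm.1.1
  | appR u _ ih =>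
    obtain ⟨A₀, -, hv⟩ := typeof_app_eq_some.mp ht
    simp only [maxdeg, Nat.max_eq_zero_iff] at hm
    exact ih hv hm.1.2
  | wrapL v _ ih =>
    simp only [maxdeg, Nat.max_eq_zero_iff] at hm
    exact ih (typeof_wrap_eq_some.mp ht).1 hm.1
  | wrapR u _ ih =>
    obtain ⟨-, D, hD⟩ := typeof_wrap_eq_some.mp ht
    simp only [maxdeg, Nat.max_eq_zero_iff] at hm
    exact ih hD hm.2

theorem reflTransGen_simpDown (n : ℕ) (t : GTm) : ReflTransGen GStep t (simpDown n t) := by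
  induction n generalizing t with
  | zero => exact .refl
  | succ n ih => exact (reflTransGen_simpD t).trans (ih _)

theorem typeof_simpDown (n : ℕ) {t : GTm} {C : Ty} (ht : t.typeof = some C) :
    (simpDown n t).typeof = some C := by
  induction n generalizing t with
  | zero => exact ht
  | succ n ih => exact ih (typeof_simpD ht)

theorem maxdeg_simpDown_eq_zero {n : ℕ} {t : GTm} {C : Ty} (ht : t.typeof = some C)
    (hm : t.maxdeg ≤ n) : (simpDown n t).maxdeg = 0 := by
  induction n generalizing t with
  | zero => exact Nat.le_zero.mp hm
  | succ n ih => exact ih (typeof_simpD ht) (maxdeg_simpD_le ht hm)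

end GTm

/-- The full simplification of a typable term is a normal form reachable from it. -/
theorem simpfull_normalizes {Γ : ℕ → Option Ty} {t : GTm} {A : Ty}
    (ht : GHasType Γ t A) :
    Relation.ReflTransGen GStep t t.simpfull ∧ ∀ s, ¬ GStep t.simpfull s := by
  have htype := ht.typeof_eq
  refine ⟨GTm.reflTransGen_simpDown _ t, fun s => ?_⟩
  exact GTm.not_gStep_of_maxdeg_eq_zero (GTm.typeof_simpDown _ htype)
    (GTm.maxdeg_simpDown_eq_zero htype le_rfl)

end LambdaG
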